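/- Let φ: M → N be a surjective degree-0 map of finitely generated graded modules over R = ℂ[x₀,…,xₘ] whose kernel K satisfies K_j = 0 for all j ≤ 1. Then for every p ≥ 0 the induced map Tor^R_p(M, ℂ)_{p+1} → Tor^R_p(N, ℂ)_{p+1} on the degree-(p+1) graded pieces is injective; in particular b_{p,1}(M) ≤ b_{p,1}(N) for all p. -/

import Mathlib

/-!
STATEMENT 9: let `φ : M → N` be a surjective degree-`0` map of finitely generated graded
modules over `R = ℂ[x₀,…,xₘ]` whose kernel `K` satisfies `K_j = 0` for all `j ≤ 1`.
Then for every `p ≥ 0` the induced map `Tor^R_p(M, ℂ)_{p+1} → Tor^R_p(N, ℂ)_{p+1}` is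
injective; in particular `b_{p,1}(M) ≤ b_{p,1}(N)`.

Following the paper, `Tor^R_p(M, ℂ)_{p+q}` is realised as the degree-`(p+q)` graded
piece of the `p`-th homology of `M ⊗_R K_•(x₀,…,xₘ)`, i.e. as the homology at position
`p` of the degree-`(p+q)` strand of the Koszul complex on the variables (whose `p`-th
term is `⋀^p V ⊗ M_q`, functions from `p`-element subsets of `{0,…,m}` to the graded
piece, with the Koszul differential); the induced map on `Tor` is the map induced on
homology by the chain map between these strands induced by `φ`.  A grading on a module
is a compatible internal direct sum decomposition into `ℂ`-subspaces indexed by `ℤ`.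
-/

open MvPolynomial

noncomputable section

/-- The polynomial ring `ℂ[x₀,…,xₘ]`. -/
abbrev PolyRing (m : ℕ) : Type := MvPolynomial (Fin (m + 1)) ℂ

variable {m : ℕ} {M : Type} [AddCommGroup M] [Module ℂ M] [Module (PolyRing m) M]
  [IsScalarTower ℂ (PolyRing m) M]

noncomputable def gradedSmul (ℳ : ℤ → Submodule ℂ M) (a : PolyRing m) (j : ℤ)
    (ha : ∀ x ∈ ℳ j, a • x ∈ ℳ (j + 1)) : ℳ j →ₗ[ℂ] ℳ (j + 1) where
  toFun x := ⟨a • (x : M), ha x x.2⟩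
  map_add' x y := Subtype.ext (by simp [smul_add])
  map_smul' c x := Subtype.ext (by
    show a • (c • (x : M)) = c • (a • (x : M))
    exact smul_comm a c (x : M))

@[simp] lemma gradedSmul_coe (ℳ : ℤ → Submodule ℂ M) (a : PolyRing m) (j : ℤ)
    (ha : ∀ x ∈ ℳ j, a • x ∈ ℳ (j + 1)) (y : ℳ j) :
    ((gradedSmul ℳ a j ha y : ℳ (j + 1)) : M) = a • (y : M) := rfl

noncomputable def strandMap (ℳ : ℤ → Submodule ℂ M) {r : ℕ} (f : Fin r → PolyRing m)
    (hf : ∀ (i : Fin r) (j : ℤ), ∀ x ∈ ℳ j, f i • x ∈ ℳ (j + 1)) (t : ℤ) (p : ℕ) :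
    ({S : Finset (Fin r) // S.card = p + 1} → ℳ (t - ((p + 1 : ℕ) : ℤ))) →ₗ[ℂ]
      ({S : Finset (Fin r) // S.card = p} → ℳ (t - (p : ℤ))) :=
  LinearMap.pi fun T => ∑ i : Fin r,
    if h : i ∈ T.1 then 0
    else ((-1 : ℂ) ^ (T.1.filter (· < i)).card) •
      ((LinearEquiv.ofEq _ _ (congrArg ℳ (by push_cast; ring))).toLinearMap.comp
        ((gradedSmul ℳ (f i) (t - ((p + 1 : ℕ) : ℤ)) (hf i (t - ((p + 1 : ℕ) : ℤ)))).comp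
          (LinearMap.proj (R := ℂ)
            (⟨insert i T.1, by rw [Finset.card_insert_of_notMem h, T.2]⟩ :
              {S : Finset (Fin r) // S.card = p + 1}))))

lemma strandMap_apply_coe (ℳ : ℤ → Submodule ℂ M) {r : ℕ} (f : Fin r → PolyRing m)
    (hf : ∀ (i : Fin r) (j : ℤ), ∀ x ∈ ℳ j, f i • x ∈ ℳ (j + 1)) (t : ℤ) (p : ℕ)
    (x : {S : Finset (Fin r) // S.card = p + 1} → ℳ (t - ((p + 1 : ℕ) : ℤ)))
    (T : {S : Finset (Fin r) // S.card = p}) :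
    ((strandMap ℳ f hf t p x T : ℳ (t - (p : ℤ))) : M)
      = ∑ i : Fin r,
          if h : i ∈ T.1 then 0
          else ((-1 : ℂ) ^ (T.1.filter (· < i)).card) • (f i •
            ((x ⟨insert i T.1, by rw [Finset.card_insert_of_notMem h, T.2]⟩ :
              ℳ (t - ((p + 1 : ℕ) : ℤ))) : M)) := by
  simp only [strandMap, LinearMap.pi_apply, LinearMap.sum_apply]
  rw [Submodule.coe_sum]
  refine Finset.sum_congr rfl fun i _ => ?_
  by_cases h : i ∈ T.1
  · simp [h]
  · simp [h]

lemma filter_card_insert {r : ℕ} (i j : Fin r) (S : Finset (Fin r)) (h : i ∉ S) :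
    ((insert i S).filter (· < j)).card
      = (S.filter (· < j)).card + if i < j then 1 else 0 := by
  rw [Finset.filter_insert]
  split_ifs with hij
  · rw [Finset.card_insert_of_notMem (fun hc => h (Finset.mem_filter.1 hc).1)]
  · omega

lemma strandMap_comp_strandMap (ℳ : ℤ → Submodule ℂ M) {r : ℕ} (f : Fin r → PolyRing m)
    (hf : ∀ (i : Fin r) (j : ℤ), ∀ x ∈ ℳ j, f i • x ∈ ℳ (j + 1)) (t : ℤ) (p : ℕ) :
    (strandMap ℳ f hf t p).comp (strandMap ℳ f hf t (p + 1)) = 0 := by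
  apply LinearMap.ext; intro x
  funext T
  simp only [LinearMap.comp_apply, LinearMap.zero_apply, Pi.zero_apply]
  apply Subtype.ext
  rw [strandMap_apply_coe]
  set F : Fin r × Fin r → M := fun P =>
    if h1 : P.1 ∈ T.1 then 0
    else if h2 : P.2 ∈ insert P.1 T.1 then 0
    else (((-1 : ℂ) ^ (T.1.filter (· < P.1)).card) *
          ((-1 : ℂ) ^ ((insert P.1 T.1).filter (· < P.2)).card)) •
        ((f P.1 * f P.2) •
          ((x ⟨insert P.2 (insert P.1 T.1), by
            rw [Finset.card_insert_of_notMem h2, Finset.card_insert_of_notMem h1, T.2]⟩ :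
            ℳ (t - ((p + 1 + 1 : ℕ) : ℤ))) : M))
    with hF
  have step1 : (∑ i : Fin r,
      if h : i ∈ T.1 then 0
      else ((-1 : ℂ) ^ (T.1.filter (· < i)).card) • (f i •
        (((strandMap ℳ f hf t (p + 1)) x
          ⟨insert i T.1, by rw [Finset.card_insert_of_notMem h, T.2]⟩ :
            ℳ (t - ((p + 1 : ℕ) : ℤ))) : M)))
      = ∑ i : Fin r, ∑ j : Fin r, F (i, j) := by
    refine Finset.sum_congr rfl fun i _ => ?_
    by_cases h1 : i ∈ T.1
    · rw [dif_pos h1]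
      refine (Finset.sum_eq_zero fun j _ => ?_).symm
      rw [hF]; dsimp only; rw [dif_pos h1]
    · rw [dif_neg h1, strandMap_apply_coe, Finset.smul_sum, Finset.smul_sum]
      refine Finset.sum_congr rfl fun j _ => ?_
      by_cases h2 : j ∈ insert i T.1
      · rw [dif_pos h2, smul_zero, smul_zero, hF]
        dsimp only
        rw [dif_neg h1, dif_pos h2]
      · rw [dif_neg h2, hF]
        dsimp only
        rw [dif_neg h1, dif_neg h2]
        rw [smul_comm (f i), smul_smul, smul_smul (f i)]
  rw [step1, ← Fintype.sum_prod_type]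
  refine Finset.sum_ninvolution Prod.swap ?_ ?_ (fun _ => Finset.mem_univ _)
    (fun P => Prod.swap_swap P)
  · rintro ⟨i, j⟩
    simp only [hF, Prod.swap_prod_mk]
    by_cases h1 : i ∈ T.1
    · rw [dif_pos h1]
      by_cases h1' : j ∈ T.1
      · rw [dif_pos h1']; simp
      · rw [dif_neg h1', dif_pos (Finset.mem_insert_of_mem h1)]; simp
    · rw [dif_neg h1]
      by_cases h2 : j ∈ insert i T.1
      · rw [dif_pos h2]
        rcases Finset.mem_insert.1 h2 with rfl | hjT
        · rw [dif_neg h1, dif_pos (Finset.mem_insert_self _ _)]; simp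
        · rw [dif_pos hjT]; simp
      · have h1' : j ∉ T.1 := fun hc => h2 (Finset.mem_insert_of_mem hc)
        have hij : i ≠ j := fun hc => h2 (hc ▸ Finset.mem_insert_self _ _)
        have h2' : i ∉ insert j T.1 := by
          simp only [Finset.mem_insert]
          rintro (rfl | hc)
          exacts [hij rfl, h1 hc]
        rw [dif_neg h2, dif_neg h1', dif_neg h2']
        have hxeq : ((x ⟨insert j (insert i T.1), by
              rw [Finset.card_insert_of_notMem h2, Finset.card_insert_of_notMem h1, T.2]⟩ :
              ℳ (t - ((p + 1 + 1 : ℕ) : ℤ))) : M)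
            = ((x ⟨insert i (insert j T.1), by
              rw [Finset.card_insert_of_notMem h2', Finset.card_insert_of_notMem h1', T.2]⟩ :
              ℳ (t - ((p + 1 + 1 : ℕ) : ℤ))) : M) := by
          congr 2
          exact Subtype.ext (Finset.insert_comm _ _ _)
        rw [hxeq, mul_comm (f j) (f i), ← add_smul]
        convert zero_smul ℂ _
        rw [filter_card_insert i j T.1 h1, filter_card_insert j i T.1 h1']
        rcases hij.lt_or_gt with hlt | hlt
        · rw [if_pos hlt, if_neg (asymm hlt), pow_add, pow_add]
          ring
        · rw [if_neg (asymm hlt), if_pos hlt, pow_add, pow_add]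
          ring
  · rintro ⟨i, j⟩ hne hc
    apply hne
    have hji : j = i := (Prod.ext_iff.1 hc).1
    subst hji
    rw [hF]
    dsimp only
    by_cases h1 : j ∈ T.1
    · rw [dif_pos h1]
    · rw [dif_neg h1, dif_pos (Finset.mem_insert_self _ _)]


noncomputable def strandComplex (ℳ : ℤ → Submodule ℂ M) {r : ℕ} (f : Fin r → PolyRing m)
    (hf : ∀ (i : Fin r) (j : ℤ), ∀ x ∈ ℳ j, f i • x ∈ ℳ (j + 1)) (t : ℤ) :
    ChainComplex (ModuleCat ℂ) ℕ :=
  ChainComplex.of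
    (fun p => ModuleCat.of ℂ ({S : Finset (Fin r) // S.card = p} → ℳ (t - (p : ℤ))))
    (fun p => ModuleCat.ofHom (strandMap ℳ f hf t p))
    (fun p => ModuleCat.hom_ext (by
      simp only [ModuleCat.hom_comp, ModuleCat.hom_ofHom, ModuleCat.hom_zero]
      exact strandMap_comp_strandMap ℳ f hf t p))

/-- The Betti number `b_{p,q}`, as the `ℂ`-dimension of the degree-`(p+q)` graded piece
of the `p`-th homology of `M ⊗_R K_•(x₀,…,xₘ)`, i.e. of the middle cohomology of
`⋀^{p+1}V ⊗ M_{q−1} → ⋀^p V ⊗ M_q → ⋀^{p−1}V ⊗ M_{q+1}` (Koszul differentials). -/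
noncomputable def koszulBetti (ℳ : ℤ → Submodule ℂ M)
    (hℳ : ∀ (i : Fin (m + 1)) (j : ℤ), ∀ x ∈ ℳ j,
      (MvPolynomial.X i : PolyRing m) • x ∈ ℳ (j + 1)) (p : ℕ) (q : ℤ) : ℕ :=
  Module.finrank ℂ
    ((strandComplex ℳ (MvPolynomial.X : Fin (m + 1) → PolyRing m) hℳ (p + q)).homology p)

variable {N : Type} [AddCommGroup N] [Module ℂ N] [Module (PolyRing m) N]
  [IsScalarTower ℂ (PolyRing m) N]

/-- The chain map between degree-`t` Koszul strands induced by a degree-`0`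
`R`-linear map `φ : M → N`. -/
noncomputable def strandChainMap (ℳ : ℤ → Submodule ℂ M) (𝒩 : ℤ → Submodule ℂ N)
    {r : ℕ} (f : Fin r → PolyRing m)
    (hfM : ∀ (i : Fin r) (j : ℤ), ∀ x ∈ ℳ j, f i • x ∈ ℳ (j + 1))
    (hfN : ∀ (i : Fin r) (j : ℤ), ∀ x ∈ 𝒩 j, f i • x ∈ 𝒩 (j + 1))
    (φ : M →ₗ[PolyRing m] N) (hφ : ∀ (j : ℤ), ∀ x ∈ ℳ j, φ x ∈ 𝒩 j) (t : ℤ) :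
    strandComplex ℳ f hfM t ⟶ strandComplex 𝒩 f hfN t where
  f p := ModuleCat.ofHom (((φ.restrictScalars ℂ).restrict (q := 𝒩 (t - (p : ℤ)))
    (hφ (t - (p : ℤ)))).compLeft {S : Finset (Fin r) // S.card = p})
  comm' := by
    rintro i j hij
    obtain rfl : j + 1 = i := hij
    simp only [strandComplex, ChainComplex.of_d]
    apply ModuleCat.hom_ext
    apply LinearMap.ext; intro x
    funext T
    apply Subtype.ext
    show ((strandMap 𝒩 f hfN t j (((φ.restrictScalars ℂ).restrict
        (hφ (t - ((j + 1 : ℕ) : ℤ)))).compLeft _ x) T : 𝒩 (t - (j : ℤ))) : N)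
      = (((φ.restrictScalars ℂ).restrict (hφ (t - (j : ℤ))))
          ((strandMap ℳ f hfM t j x) T) : N)
    rw [strandMap_apply_coe]
    have hres : ∀ (jj : ℤ) (y : ℳ jj),
        (((φ.restrictScalars ℂ).restrict (hφ jj)) y : N) = φ (y : M) := fun _ _ => rfl
    rw [hres, strandMap_apply_coe, map_sum]
    refine Finset.sum_congr rfl fun i _ => ?_
    by_cases h : i ∈ T.1
    · rw [dif_pos h, dif_pos h, map_zero]
    · rw [dif_neg h, dif_neg h, LinearMap.map_smul_of_tower, LinearMap.map_smul]
      rfl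

/-!
In the Koszul strand of degree `p + 1`, position `p` is built from the degree-`1` piece, on which
`φ` is injective, and position `p + 1` from the degree-`0` piece, on which `φ` is surjective
(every graded piece of `N` is hit because `φ` is surjective and respects the gradings). A chain
map that is surjective one step up and injective at `p` is injective on homology at `p`: if the
image of a cycle bounds, lift the bounding chain and use injectivity to see that the cycle itself
bounds. For the Betti numbers, the graded pieces of the finitely generated module `N` are
finite-dimensional, being spanned by monomial multiples of the homogeneous components of
finitely many generators.
-/

open CategoryTheory

lemma CategoryTheory.ShortComplex.mono_homologyMap_of_epi_of_mono {C : Type*} [Category C]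
    [Abelian C] {S₁ S₂ : ShortComplex C} (φ : S₁ ⟶ S₂) [Epi φ.τ₁] [Mono φ.τ₂] :
    Mono (homologyMap φ) := by
  rw [mono_homologyMap_iff_up_to_refinements]
  intro A x₂ _ y₁ fac
  obtain ⟨A', π, hπ, x₁, hx₁⟩ := surjective_up_to_refinements_of_epi φ.τ₁ y₁
  refine ⟨A', π, hπ, x₁, ?_⟩
  rw [← cancel_mono φ.τ₂, Category.assoc, fac, reassoc_of% hx₁, Category.assoc, φ.comm₁₂]

lemma HomologicalComplex.homologyMap_injective_of_surjective_of_injective {R ι : Type*}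
    [Ring R] {c : ComplexShape ι} {K L : HomologicalComplex (ModuleCat R) c} (φ : K ⟶ L) (i : ι)
    (h₁ : Function.Surjective (φ.f (c.prev i))) (h₂ : Function.Injective (φ.f i)) :
    Function.Injective (homologyMap φ i) := by
  have : Epi ((shortComplexFunctor _ c i).map φ).τ₁ := (ModuleCat.epi_iff_surjective _).2 h₁
  have : Mono ((shortComplexFunctor _ c i).map φ).τ₂ := (ModuleCat.mono_iff_injective _).2 h₂
  exact (ModuleCat.mono_iff_injective _).1
    (ShortComplex.mono_homologyMap_of_epi_of_mono ((shortComplexFunctor _ c i).map φ))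

lemma HomologicalComplex.finite_homology {R ι : Type*} [CommRing R] [IsNoetherianRing R]
    {c : ComplexShape ι} (K : HomologicalComplex (ModuleCat R) c) (i : ι)
    [Module.Finite R (K.X i)] : Module.Finite R (K.homology i) := by
  have : Module.Finite R (K.sc i).X₂ := ‹Module.Finite R (K.X i)›
  have : Module.Finite R (K.sc i).cycles :=
    .of_injective (K.sc i).iCycles.hom ((ModuleCat.mono_iff_injective _).1 inferInstance)
  exact .of_surjective (K.sc i).homologyπ.hom ((ModuleCat.epi_iff_surjective _).1 inferInstance)

namespace DirectSum

variable {ι P Q : Type*} [DecidableEq ι] [AddCommMonoid P] [AddCommMonoid Q]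

theorem coe_decompose_map_of_map_mem {σ τ : Type*} [SetLike σ P] [AddSubmonoidClass σ P] [SetLike τ Q]
    [AddSubmonoidClass τ Q] (𝒜 : ι → σ) (ℬ : ι → τ) [Decomposition 𝒜] [Decomposition ℬ]
    (φ : P →+ Q) (hφ : ∀ i, ∀ x ∈ 𝒜 i, φ x ∈ ℬ i) (x : P) (j : ι) :
    (decompose ℬ (φ x) j : Q) = φ (decompose 𝒜 x j) := by
  induction x using Decomposition.inductionOn 𝒜 with
  | zero => simp
  | @homogeneous i x =>
    obtain ⟨x, hx⟩ := x
    by_cases hij : i = j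
    · subst hij
      rw [decompose_of_mem_same ℬ (hφ i x hx), decompose_of_mem_same 𝒜 hx]
    · rw [decompose_of_mem_ne ℬ (hφ i x hx) hij, decompose_of_mem_ne 𝒜 hx hij, map_zero]
  | add x y hx hy => simp only [map_add, decompose_add, add_apply, AddMemClass.coe_add, hx, hy]

theorem exists_mem_eq_of_surjective {σ τ : Type*} [SetLike σ P] [AddSubmonoidClass σ P]
    [SetLike τ Q] [AddSubmonoidClass τ Q] (𝒜 : ι → σ) (ℬ : ι → τ) [Decomposition 𝒜]
    [Decomposition ℬ] (φ : P →+ Q) (hφ : ∀ i, ∀ x ∈ 𝒜 i, φ x ∈ ℬ i)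
    (hsurj : Function.Surjective φ) {j : ι} {y : Q} (hy : y ∈ ℬ j) : ∃ x ∈ 𝒜 j, φ x = y := by
  obtain ⟨x, rfl⟩ := hsurj y
  exact ⟨decompose 𝒜 x j, SetLike.coe_mem _, by
    rw [← coe_decompose_map_of_map_mem 𝒜 ℬ φ hφ, decompose_of_mem_same ℬ hy]⟩

theorem exists_finset_homogeneous_span_eq_top (R : Type*) [Semiring R] [Module R P]
    [Module.Finite R P] {σ : Type*} [SetLike σ P] [AddSubmonoidClass σ P] (𝒜 : ι → σ)
    [Decomposition 𝒜] :
    ∃ s : Finset (ι × P), (∀ g ∈ s, g.2 ∈ 𝒜 g.1) ∧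
      Submodule.span R (Prod.snd '' (s : Set (ι × P))) = ⊤ := by
  classical
  obtain ⟨t, ht⟩ := Module.finite_def.1 ‹Module.Finite R P›
  refine ⟨t.biUnion fun x => (decompose 𝒜 x).support.image fun i => (i, decompose 𝒜 x i),
    ?_, eq_top_iff.2 (ht ▸ Submodule.span_le.2 fun x hx => ?_)⟩
  · simp only [Finset.mem_biUnion, Finset.mem_image]
    rintro _ ⟨x, -, i, -, rfl⟩
    exact SetLike.coe_mem _
  · rw [SetLike.mem_coe, ← sum_support_decompose 𝒜 x]
    refine Submodule.sum_mem _ fun i hi => Submodule.subset_span ⟨(i, decompose 𝒜 x i), ?_, rfl⟩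
    simp only [Finset.coe_biUnion, Finset.coe_image, Set.mem_iUnion, Set.mem_image]
    exact ⟨x, hx, i, hi, rfl⟩

theorem mem_span_image_of_mem {S κ : Type*} [Semiring S] [Module S P] (𝒜 : ι → Submodule S P)
    [Decomposition 𝒜] (v : κ → P) (deg : κ → ι) (hv : ∀ a, v a ∈ 𝒜 (deg a)) {j : ι} {y : P}
    (hy : y ∈ 𝒜 j) (hyv : y ∈ Submodule.span S (Set.range v)) :
    y ∈ Submodule.span S (v '' {a | deg a = j}) := by
  suffices h : ∀ z ∈ Submodule.span S (Set.range v),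
      (decompose 𝒜 z j : P) ∈ Submodule.span S (v '' {a | deg a = j}) by
    simpa only [decompose_of_mem_same 𝒜 hy] using h y hyv
  intro z hz
  induction hz using Submodule.span_induction with
  | mem _ hz =>
    obtain ⟨a, rfl⟩ := hz
    by_cases ha : deg a = j
    · rw [← ha, decompose_of_mem_same 𝒜 (hv a)]
      exact Submodule.subset_span ⟨a, rfl, rfl⟩
    · rw [decompose_of_mem_ne 𝒜 (hv a) ha]
      exact zero_mem _
  | zero => simp
  | add x y _ _ hx hy =>
    simpa only [decompose_add, add_apply, Submodule.coe_add] using add_mem hx hy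
  | smul r x _ hx => simpa only [decompose_smul, smul_apply, Submodule.coe_smul] using
      Submodule.smul_mem _ r hx

end DirectSum

namespace MvPolynomial

variable {σ K P A : Type*}

theorem X_pow_smul_mem [CommSemiring K] [AddCommMonoid P] [Module (MvPolynomial σ K) P]
    [SetLike A P] (𝒜 : ℤ → A) (hX : ∀ i d, ∀ x ∈ 𝒜 d, (X i : MvPolynomial σ K) • x ∈ 𝒜 (d + 1))
    (i : σ) (n : ℕ) {d : ℤ} {x : P} (hx : x ∈ 𝒜 d) :
    (X i ^ n : MvPolynomial σ K) • x ∈ 𝒜 (d + n) := by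
  induction n with
  | zero => simpa using hx
  | succ n ih =>
    rw [pow_succ', mul_smul, Nat.cast_succ, ← add_assoc]
    exact hX i _ _ ih

theorem monomial_smul_mem [CommSemiring K] [AddCommMonoid P] [Module (MvPolynomial σ K) P]
    [SetLike A P] (𝒜 : ℤ → A) (hX : ∀ i d, ∀ x ∈ 𝒜 d, (X i : MvPolynomial σ K) • x ∈ 𝒜 (d + 1))
    (α : σ →₀ ℕ) {d : ℤ} {x : P} (hx : x ∈ 𝒜 d) :
    (monomial α (1 : K)) • x ∈ 𝒜 (d + α.degree) := by
  induction α using Finsupp.induction with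
  | zero => simpa using hx
  | single_add i n α _ _ ih =>
    rw [monomial_single_add, mul_smul, map_add, Finsupp.degree_single, Nat.cast_add,
      add_comm _ (α.degree : ℤ), ← add_assoc]
    exact X_pow_smul_mem 𝒜 hX i n ih

theorem finiteDimensional_of_moduleFinite [Field K] [Finite σ] [AddCommGroup P] [Module K P]
    [Module (MvPolynomial σ K) P] [IsScalarTower K (MvPolynomial σ K) P]
    [Module.Finite (MvPolynomial σ K) P] (𝒜 : ℤ → Submodule K P) [DirectSum.Decomposition 𝒜]
    (hX : ∀ i d, ∀ x ∈ 𝒜 d, (X i : MvPolynomial σ K) • x ∈ 𝒜 (d + 1)) (j : ℤ) :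
    FiniteDimensional K (𝒜 j) := by
  obtain ⟨s, hs, hspan⟩ := DirectSum.exists_finset_homogeneous_span_eq_top (MvPolynomial σ K) 𝒜
  let v : s × (σ →₀ ℕ) → P := fun a => monomial a.2 (1 : K) • a.1.1.2
  let deg : s × (σ →₀ ℕ) → ℤ := fun a => a.1.1.1 + a.2.degree
  have hv : ∀ a, v a ∈ 𝒜 (deg a) := fun a => monomial_smul_mem 𝒜 hX a.2 (hs _ a.1.2)
  have hspan_v : Submodule.span K (Set.range v) = ⊤ := by
    have := Submodule.span_smul_of_span_eq_top (R := K) (basisMonomials σ K).span_eq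
      (Prod.snd '' (s : Set (ℤ × P)))
    rw [hspan, Submodule.restrictScalars_top, coe_basisMonomials] at this
    refine eq_top_iff.2 (this ▸ Submodule.span_mono ?_)
    rintro _ ⟨_, ⟨α, rfl⟩, _, ⟨g, hg, rfl⟩, rfl⟩
    exact ⟨(⟨g, hg⟩, α), rfl⟩
  have hfin : (v '' {a | deg a = j}).Finite := by
    refine Set.Finite.image _ ((Set.finite_iUnion fun g : s => (Set.finite_singleton g).prod
      (Finsupp.finite_of_degree_eq (σ := σ) (j - g.1.1).toNat)).subset ?_)
    rintro ⟨g, α⟩ (h : g.1.1 + α.degree = j)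
    exact Set.mem_iUnion.2 ⟨g, rfl, by simp only [Set.mem_ofPred_eq]; omega⟩
  have := FiniteDimensional.span_of_finite K hfin
  exact Submodule.finiteDimensional_of_le fun y hy =>
    DirectSum.mem_span_image_of_mem 𝒜 v deg hv hy (hspan_v ▸ Submodule.mem_top)

end MvPolynomial

section StrandChainMap

variable {ℳ : ℤ → Submodule ℂ M} {𝒩 : ℤ → Submodule ℂ N} {r : ℕ} {f : Fin r → PolyRing m}
  {hfM : ∀ (i : Fin r) (j : ℤ), ∀ x ∈ ℳ j, f i • x ∈ ℳ (j + 1)}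
  {hfN : ∀ (i : Fin r) (j : ℤ), ∀ x ∈ 𝒩 j, f i • x ∈ 𝒩 (j + 1)}
  {φ : M →ₗ[PolyRing m] N} {hφ : ∀ (j : ℤ), ∀ x ∈ ℳ j, φ x ∈ 𝒩 j} {t : ℤ} {p : ℕ}

theorem strandChainMap_f_injective (h : ∀ x ∈ ℳ (t - p), φ x = 0 → x = 0) :
    Function.Injective ((strandChainMap ℳ 𝒩 f hfM hfN φ hφ t).f p) := by
  intro x y hxy
  funext T
  have hT : φ (x T) = φ (y T) := congrArg Subtype.val (congrFun hxy T)
  exact Subtype.ext (sub_eq_zero.1 (h _ (sub_mem (x T).2 (y T).2) (by rw [map_sub, hT, sub_self])))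

theorem strandChainMap_f_surjective (h : ∀ y ∈ 𝒩 (t - p), ∃ x ∈ ℳ (t - p), φ x = y) :
    Function.Surjective ((strandChainMap ℳ 𝒩 f hfM hfN φ hφ t).f p) := by
  choose g hg hgφ using fun y : 𝒩 (t - p) => h y y.2
  exact fun y => ⟨fun T => ⟨g (y T), hg _⟩, funext fun T => Subtype.ext (hgφ (y T))⟩

end StrandChainMap

theorem tor_linear_strand_injective_general (m : ℕ) (M N : Type)
    [AddCommGroup M] [Module ℂ M] [Module (PolyRing m) M] [IsScalarTower ℂ (PolyRing m) M]
    [AddCommGroup N] [Module ℂ N] [Module (PolyRing m) N] [IsScalarTower ℂ (PolyRing m) N]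
    [Module.Finite (PolyRing m) N]
    (ℳ : ℤ → Submodule ℂ M) (hMint : DirectSum.IsInternal ℳ)
    (hMX : ∀ (i : Fin (m + 1)) (j : ℤ), ∀ x ∈ ℳ j,
      (MvPolynomial.X i : PolyRing m) • x ∈ ℳ (j + 1))
    (𝒩 : ℤ → Submodule ℂ N) (hNint : DirectSum.IsInternal 𝒩)
    (hNX : ∀ (i : Fin (m + 1)) (j : ℤ), ∀ x ∈ 𝒩 j,
      (MvPolynomial.X i : PolyRing m) • x ∈ 𝒩 (j + 1))
    (φ : M →ₗ[PolyRing m] N) (hφsurj : Function.Surjective φ)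
    (hφgr : ∀ (j : ℤ), ∀ x ∈ ℳ j, φ x ∈ 𝒩 j)
    -- the kernel `K` of `φ` satisfies `K_j = 0` for all `j ≤ 1`
    (hker : ∀ j : ℤ, j ≤ 1 → ∀ x ∈ ℳ j, φ x = 0 → x = 0) :
    ∀ p : ℕ,
      Function.Injective
        (HomologicalComplex.homologyMap
          (strandChainMap ℳ 𝒩 (MvPolynomial.X : Fin (m + 1) → PolyRing m)
            hMX hNX φ hφgr ((p : ℤ) + 1)) p) ∧
      koszulBetti ℳ hMX p 1 ≤ koszulBetti 𝒩 hNX p 1 := by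
  intro p
  let _ := hMint.chooseDecomposition
  let _ := hNint.chooseDecomposition
  have hinj : Function.Injective (HomologicalComplex.homologyMap
      (strandChainMap ℳ 𝒩 X hMX hNX φ hφgr ((p : ℤ) + 1)) p) :=
    HomologicalComplex.homologyMap_injective_of_surjective_of_injective _ p
      (strandChainMap_f_surjective fun _ hy =>
        DirectSum.exists_mem_eq_of_surjective ℳ 𝒩 (φ : M →+ N) hφgr hφsurj hy)
      (strandChainMap_f_injective (hker _ (by omega)))
  have := MvPolynomial.finiteDimensional_of_moduleFinite 𝒩 hNX (p + 1 - p)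
  have : Module.Finite ℂ ((strandComplex 𝒩 X hNX ((p : ℤ) + 1)).X p) :=
    inferInstanceAs (Module.Finite ℂ ({S : Finset (Fin (m + 1)) // S.card = p} → 𝒩 (p + 1 - p)))
  have := HomologicalComplex.finite_homology (strandComplex 𝒩 X hNX ((p : ℤ) + 1)) p
  exact ⟨hinj, LinearMap.finrank_le_finrank_of_injective hinj⟩

/-- **Injectivity of Tor in the linear strand.**  If `φ : M ↠ N` is a surjective
degree-`0` map of finitely generated graded `R`-modules (`R = ℂ[x₀,…,xₘ]`) whose kernel
`K` satisfies `K_j = 0` for `j ≤ 1`, then for every `p ≥ 0` the induced map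
`Tor^R_p(M, ℂ)_{p+1} → Tor^R_p(N, ℂ)_{p+1}` is injective; in particular
`b_{p,1}(M) ≤ b_{p,1}(N)`. -/
theorem tor_linear_strand_injective (m : ℕ) (M N : Type)
    [AddCommGroup M] [Module ℂ M] [Module (PolyRing m) M] [IsScalarTower ℂ (PolyRing m) M]
    [AddCommGroup N] [Module ℂ N] [Module (PolyRing m) N] [IsScalarTower ℂ (PolyRing m) N]
    [Module.Finite (PolyRing m) M] [Module.Finite (PolyRing m) N]
    (ℳ : ℤ → Submodule ℂ M) (hMint : DirectSum.IsInternal ℳ)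
    (hMX : ∀ (i : Fin (m + 1)) (j : ℤ), ∀ x ∈ ℳ j,
      (MvPolynomial.X i : PolyRing m) • x ∈ ℳ (j + 1))
    (𝒩 : ℤ → Submodule ℂ N) (hNint : DirectSum.IsInternal 𝒩)
    (hNX : ∀ (i : Fin (m + 1)) (j : ℤ), ∀ x ∈ 𝒩 j,
      (MvPolynomial.X i : PolyRing m) • x ∈ 𝒩 (j + 1))
    (φ : M →ₗ[PolyRing m] N) (hφsurj : Function.Surjective φ)
    (hφgr : ∀ (j : ℤ), ∀ x ∈ ℳ j, φ x ∈ 𝒩 j)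
    -- the kernel `K` of `φ` satisfies `K_j = 0` for all `j ≤ 1`
    (hker : ∀ j : ℤ, j ≤ 1 → ∀ x ∈ ℳ j, φ x = 0 → x = 0) :
    ∀ p : ℕ,
      Function.Injective
        (HomologicalComplex.homologyMap
          (strandChainMap ℳ 𝒩 (MvPolynomial.X : Fin (m + 1) → PolyRing m)
            hMX hNX φ hφgr ((p : ℤ) + 1)) p) ∧
      koszulBetti ℳ hMX p 1 ≤ koszulBetti 𝒩 hNX p 1 :=
  tor_linear_strand_injective_general m M N ℳ hMint hMX 𝒩 hNint hNX φ hφsurj hφgr hker
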